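/- Let n ≥ 1, let F be a real antisymmetric n×n matrix (F_{ab} = −F_{ba}), let A ∈ ℝⁿ and m ∈ ℝ. For vectors t, u ∈ ℝⁿ define the contracted Maxwell/Proca stress tensor T(t,u) = ∑_{a,b,c,d} t_a u_b F_{ac} η_{cd} F_{bd} − (1/4)·η(t,u)·(F·F) + m²·((∑_a A_a t_a)(∑_b A_b u_b) − (1/2)·η(t,u)·η(A,A)), where F·F = ∑_{c,d,e,f} F_{cd} η_{ce} η_{df} F_{ef} and η_{ab} is the Minkowski matrix diag(−1,1,…,1). Then for every timelike vector t one has T(t,t) ≥ 0: the Maxwell and Proca fields satisfy the weak energy condition pointwise, off-shell. -/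

import Mathlib

open scoped BigOperators

/-- The Minkowski bilinear form on `ℝⁿ`: `η(x,y) = -x₀y₀ + ∑_{i≥1} xᵢyᵢ`. -/
def minkowski {n : ℕ} (x y : Fin n → ℝ) : ℝ :=
  ∑ i : Fin n, (if (i : ℕ) = 0 then (-1 : ℝ) else 1) * x i * y i

/-- The Minkowski metric matrix `diag(−1,1,…,1)`. -/
def etaMat (n : ℕ) : Matrix (Fin n) (Fin n) ℝ :=
  fun i j => if i = j then (if (i : ℕ) = 0 then -1 else 1) else 0

/-- The full contraction `F^{cd} F_{cd} = ∑ F_{cd} η_{ce} η_{df} F_{ef}`. -/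
def FdotF {n : ℕ} (F : Matrix (Fin n) (Fin n) ℝ) : ℝ :=
  ∑ c : Fin n, ∑ d : Fin n, ∑ e : Fin n, ∑ f : Fin n,
    F c d * etaMat n c e * etaMat n d f * F e f

/-- The Maxwell/Proca stress tensor contracted with vectors `t` and `u`:
`T(t,u) = ∑ t_a u_b F_{ac} η_{cd} F_{bd} − (1/4) η(t,u) F·F
          + m² ((A·t)(A·u) − (1/2) η(t,u) η(A,A))`. -/
noncomputable def procaT {n : ℕ} (F : Matrix (Fin n) (Fin n) ℝ) (A : Fin n → ℝ) (m : ℝ)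
    (t u : Fin n → ℝ) : ℝ :=
  (∑ a : Fin n, ∑ b : Fin n, ∑ c : Fin n, ∑ d : Fin n,
      t a * u b * F a c * etaMat n c d * F b d)
    - (1/4) * minkowski t u * FdotF F
    + m^2 * ((∑ a : Fin n, A a * t a) * (∑ b : Fin n, A b * u b)
              - (1/2) * minkowski t u * minkowski A A)

/-!
Put `τ = η(t,t) < 0` and `H = -τ η + t tᵀ`. By the reverse Cauchy–Schwarz inequality
`τ η(x,x) ≤ η(t,x)²` the matrix `H` is positive semidefinite. With `E = tᵀF`, expanding
`tr(F H Fᵀ H)` and using `tᵀFt = 0` gives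
`τ² (η(E,E) - ¼ τ F·F) = ½ τ² η(E,E) - ¼ τ tr(F H Fᵀ H)`.
Both terms are nonnegative: `η(E,E) ≥ 0` because the covector `E` annihilates `t`, and the
trace of a product of the positive semidefinite matrices `F H Fᵀ` and `H` is nonnegative by the
Schur product theorem. Likewise `(A·t)² - ½ τ η(A,A) = ½ (A·t)² + ½ Aᵀ H A ≥ 0`.
-/

open Matrix

open scoped ComplexOrder in
theorem Matrix.PosSemidef.trace_mul_nonneg {ι 𝕜 : Type*} [Fintype ι] [RCLike 𝕜]
    {A B : Matrix ι ι 𝕜} (hA : A.PosSemidef) (hB : B.PosSemidef) : 0 ≤ (A * B).trace := by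
  refine ((hA.hadamard hB.transpose).dotProduct_mulVec_nonneg fun _ => 1).trans_eq ?_
  simp [trace, mul_apply, dotProduct, mulVec, hadamard_apply]

lemma etaMat_eq_diagonal (n : ℕ) :
    etaMat n = diagonal fun i : Fin n => if (i : ℕ) = 0 then -1 else 1 := by
  ext i j
  simp [etaMat, diagonal_apply]

lemma etaMat_transpose (n : ℕ) : (etaMat n)ᵀ = etaMat n := by
  rw [etaMat_eq_diagonal, diagonal_transpose]

lemma etaMat_mul_etaMat (n : ℕ) : etaMat n * etaMat n = 1 := by
  rw [etaMat_eq_diagonal, diagonal_mul_diagonal, ← diagonal_one]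
  congr 1
  ext i
  split_ifs <;> norm_num

lemma minkowski_eq_dotProduct {n : ℕ} (x y : Fin n → ℝ) :
    minkowski x y = x ⬝ᵥ (etaMat n *ᵥ y) := by
  simp only [minkowski, etaMat_eq_diagonal, mulVec_diagonal, dotProduct]
  exact Finset.sum_congr rfl fun i _ => by ring

lemma minkowski_comm {n : ℕ} (x y : Fin n → ℝ) : minkowski x y = minkowski y x :=
  Finset.sum_congr rfl fun i _ => by ring

lemma minkowski_etaMat_mulVec {n : ℕ} (x y : Fin n → ℝ) :
    minkowski x (etaMat n *ᵥ y) = x ⬝ᵥ y := by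
  rw [minkowski_eq_dotProduct, mulVec_mulVec, etaMat_mul_etaMat, one_mulVec]

lemma minkowski_etaMat_mulVec_self {n : ℕ} (x : Fin n → ℝ) :
    minkowski (etaMat n *ᵥ x) (etaMat n *ᵥ x) = minkowski x x := by
  rw [minkowski_etaMat_mulVec, minkowski_eq_dotProduct, dotProduct_comm]

lemma minkowski_add_smul_self {n : ℕ} (x t : Fin n → ℝ) (l : ℝ) :
    minkowski (x + l • t) (x + l • t)
      = minkowski x x + 2 * l * minkowski t x + l ^ 2 * minkowski t t := by
  simp only [minkowski_eq_dotProduct, mulVec_add, mulVec_smul, dotProduct_add, add_dotProduct,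
    dotProduct_smul, smul_dotProduct, smul_eq_mul]
  simp only [← minkowski_eq_dotProduct, minkowski_comm x t]
  ring

lemma minkowski_self_nonneg_of_apply_zero {n : ℕ} {y : Fin n → ℝ}
    (hy : ∀ i : Fin n, (i : ℕ) = 0 → y i = 0) : 0 ≤ minkowski y y := by
  refine Finset.sum_nonneg fun i _ => ?_
  by_cases hi : (i : ℕ) = 0
  · simp [hy i hi]
  · simpa [hi] using mul_self_nonneg (y i)

lemma minkowski_mul_self_le_sq {n : ℕ} {t : Fin n → ℝ} (ht : minkowski t t < 0)
    (x : Fin n → ℝ) : minkowski t t * minkowski x x ≤ minkowski t x ^ 2 := by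
  obtain ⟨i₀, hi₀, ht₀⟩ : ∃ i : Fin n, (i : ℕ) = 0 ∧ t i ≠ 0 := by
    by_contra! h
    exact ht.not_ge (minkowski_self_nonneg_of_apply_zero h)
  -- `x + l t` has vanishing time component, hence is spacelike or zero
  set l := -x i₀ / t i₀
  have hy : 0 ≤ minkowski (x + l • t) (x + l • t) := by
    refine minkowski_self_nonneg_of_apply_zero fun i hi => ?_
    obtain rfl : i = i₀ := Fin.ext (hi.trans hi₀.symm)
    simp [l, div_mul_cancel₀ _ ht₀]
  rw [minkowski_add_smul_self] at hy
  nlinarith [sq_nonneg (l * minkowski t t + minkowski t x)]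

lemma minkowski_mul_self_le_sq_dotProduct {n : ℕ} {t : Fin n → ℝ} (ht : minkowski t t < 0)
    (x : Fin n → ℝ) : minkowski t t * minkowski x x ≤ (t ⬝ᵥ x) ^ 2 := by
  have h := minkowski_mul_self_le_sq ht (etaMat n *ᵥ x)
  rwa [minkowski_etaMat_mulVec_self, minkowski_etaMat_mulVec] at h

/-- `-η(t,t)` times the inverse of the metric induced on the orthogonal complement of `t`,
viewed as a form on covectors. -/
noncomputable def spatialMetric {n : ℕ} (t : Fin n → ℝ) : Matrix (Fin n) (Fin n) ℝ :=
  -minkowski t t • etaMat n + vecMulVec t t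

lemma dotProduct_spatialMetric_mulVec {n : ℕ} (t x : Fin n → ℝ) :
    x ⬝ᵥ (spatialMetric t *ᵥ x) = -minkowski t t * minkowski x x + (t ⬝ᵥ x) ^ 2 := by
  rw [spatialMetric, add_mulVec, smul_mulVec, dotProduct_add, dotProduct_smul,
    vecMulVec_mulVec, ← minkowski_eq_dotProduct]
  simp [dotProduct_comm x t, sq]

lemma spatialMetric_posSemidef {n : ℕ} {t : Fin n → ℝ} (ht : minkowski t t < 0) :
    (spatialMetric t).PosSemidef := by
  refine .of_dotProduct_mulVec_nonneg ?_ fun x => ?_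
  · simp [IsHermitian, spatialMetric, transpose_vecMulVec, etaMat_transpose]
  · rw [star_trivial, dotProduct_spatialMetric_mulVec]
    linarith [minkowski_mul_self_le_sq_dotProduct ht x]

lemma mul_spatialMetric_mul_transpose {n : ℕ} (F : Matrix (Fin n) (Fin n) ℝ) (t : Fin n → ℝ) :
    F * spatialMetric t * Fᵀ
      = -minkowski t t • (F * etaMat n * Fᵀ) + vecMulVec (F *ᵥ t) (F *ᵥ t) := by
  rw [spatialMetric, Matrix.mul_add, Matrix.add_mul, Matrix.mul_smul, Matrix.smul_mul,
    mul_vecMulVec, vecMulVec_mul, vecMul_transpose]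

lemma trace_mul_spatialMetric {n : ℕ} (X : Matrix (Fin n) (Fin n) ℝ) (t : Fin n → ℝ) :
    trace (X * spatialMetric t) = -minkowski t t * trace (X * etaMat n) + t ⬝ᵥ (X *ᵥ t) := by
  rw [spatialMetric, Matrix.mul_add, Matrix.mul_smul, trace_add, trace_smul, mul_vecMulVec,
    trace_vecMulVec, dotProduct_comm, smul_eq_mul]

lemma vecMul_dotProduct_self_of_transpose_eq_neg {n : ℕ} {F : Matrix (Fin n) (Fin n) ℝ}
    (hF : Fᵀ = -F) (t : Fin n → ℝ) : t ᵥ* F ⬝ᵥ t = 0 := by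
  have h := dotProduct_mulVec t F t
  rw [← vecMul_transpose, hF, vecMul_neg, dotProduct_neg, dotProduct_comm] at h
  linarith

lemma FdotF_eq_trace {n : ℕ} (F : Matrix (Fin n) (Fin n) ℝ) :
    FdotF F = trace (F * etaMat n * Fᵀ * etaMat n) := by
  simp only [FdotF, etaMat_eq_diagonal, diagonal_apply, mul_ite, mul_neg, mul_one, mul_zero,
    ite_mul, neg_mul, zero_mul, Finset.sum_ite_eq, Finset.mem_univ, ↓reduceIte,
    Finset.sum_ite_irrel, Finset.sum_neg_distrib, trace, diag_apply, mul_apply, Finset.sum_ite_eq',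
    transpose_apply]
  refine Finset.sum_congr rfl fun c _ => ?_
  by_cases hc : (c : ℕ) = 0
  · simp only [hc, ↓reduceIte, ← Finset.sum_neg_distrib]
    exact Finset.sum_congr rfl fun d _ => by split_ifs <;> ring
  · simp only [hc, ↓reduceIte]

lemma trace_mul_spatialMetric_mul_transpose_mul_spatialMetric {n : ℕ}
    {F : Matrix (Fin n) (Fin n) ℝ} (hF : Fᵀ = -F) (t : Fin n → ℝ) :
    trace (F * spatialMetric t * Fᵀ * spatialMetric t)
      = minkowski t t ^ 2 * FdotF F - 2 * minkowski t t * minkowski (t ᵥ* F) (t ᵥ* F) := by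
  have hFt : F *ᵥ t = -(t ᵥ* F) := by rw [← vecMul_transpose, hF, vecMul_neg]
  rw [trace_mul_spatialMetric, mul_spatialMetric_mul_transpose, hFt, neg_vecMulVec, vecMulVec_neg,
    neg_neg, FdotF_eq_trace]
  set τ := minkowski t t
  simp only [Matrix.add_mul, add_mulVec, smul_mulVec, Matrix.smul_mul, trace_add, trace_smul,
    vecMulVec_mul, trace_vecMulVec, vecMulVec_mulVec, ← mulVec_mulVec, mulVec_transpose,
    vecMul_dotProduct_self_of_transpose_eq_neg hF, MulOpposite.op_zero, zero_smul, add_zero,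
    dotProduct_smul, dotProduct_mulVec, smul_eq_mul]
  rw [minkowski_eq_dotProduct, dotProduct_mulVec, dotProduct_comm (t ᵥ* F)]
  ring

lemma sum_mul_mul_etaMat_mul_eq_minkowski_vecMul {n : ℕ} (F : Matrix (Fin n) (Fin n) ℝ)
    (t u : Fin n → ℝ) :
    ∑ a : Fin n, ∑ b : Fin n, ∑ c : Fin n, ∑ d : Fin n, t a * u b * F a c * etaMat n c d * F b d
      = minkowski (t ᵥ* F) (u ᵥ* F) := by
  calc _ = ∑ a : Fin n, ∑ c : Fin n, ∑ d : Fin n, ∑ b : Fin n,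
        t a * (F a c * (etaMat n c d * (F b d * u b))) := by
        refine Finset.sum_congr rfl fun a _ => ?_
        rw [Finset.sum_comm]
        refine Finset.sum_congr rfl fun c _ => ?_
        rw [Finset.sum_comm]
        exact Finset.sum_congr rfl fun d _ => Finset.sum_congr rfl fun b _ => by ring
    _ = _ := by
        rw [minkowski_eq_dotProduct, ← dotProduct_mulVec, ← mulVec_transpose]
        simp only [dotProduct, mulVec, transpose_apply, Finset.mul_sum]

lemma maxwell_energy_nonneg {n : ℕ} {F : Matrix (Fin n) (Fin n) ℝ} (hF : Fᵀ = -F)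
    {t : Fin n → ℝ} (ht : minkowski t t < 0) :
    0 ≤ minkowski (t ᵥ* F) (t ᵥ* F) - 1 / 4 * minkowski t t * FdotF F := by
  set τ := minkowski t t
  have hE : 0 ≤ minkowski (t ᵥ* F) (t ᵥ* F) := by
    have h := minkowski_mul_self_le_sq_dotProduct ht (t ᵥ* F)
    rw [dotProduct_comm, vecMul_dotProduct_self_of_transpose_eq_neg hF] at h
    nlinarith
  have hH := spatialMetric_posSemidef ht
  have htr : 0 ≤ trace (F * spatialMetric t * Fᵀ * spatialMetric t) := by
    simpa [conjTranspose_eq_transpose_of_trivial] using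
      (hH.mul_mul_conjTranspose_same F).trace_mul_nonneg hH
  have key : τ ^ 2 * (minkowski (t ᵥ* F) (t ᵥ* F) - 1 / 4 * τ * FdotF F)
      = 1 / 2 * τ ^ 2 * minkowski (t ᵥ* F) (t ᵥ* F)
        + -τ / 4 * trace (F * spatialMetric t * Fᵀ * spatialMetric t) := by
    rw [trace_mul_spatialMetric_mul_transpose_mul_spatialMetric hF]
    ring
  refine nonneg_of_mul_nonneg_right ?_ (sq_pos_of_neg ht)
  have : 0 ≤ -τ / 4 := by linarith
  rw [key]
  positivity

lemma proca_mass_energy_nonneg {n : ℕ} (A : Fin n → ℝ) {t : Fin n → ℝ}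
    (ht : minkowski t t < 0) :
    0 ≤ (A ⬝ᵥ t) * (A ⬝ᵥ t) - 1 / 2 * minkowski t t * minkowski A A := by
  have h := minkowski_mul_self_le_sq_dotProduct ht A
  rw [dotProduct_comm] at h
  nlinarith [sq_nonneg (A ⬝ᵥ t)]

theorem maxwell_proca_wec_general
    (n : ℕ) (F : Matrix (Fin n) (Fin n) ℝ)
    (hF : ∀ a b : Fin n, F a b = -F b a)
    (A : Fin n → ℝ) (m : ℝ) :
    ∀ t : Fin n → ℝ, minkowski t t < 0 → 0 ≤ procaT F A m t t := by
  intro t ht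
  have hF' : Fᵀ = -F := by
    ext a b
    simp [hF b a]
  rw [procaT, sum_mul_mul_etaMat_mul_eq_minkowski_vecMul]
  exact add_nonneg (maxwell_energy_nonneg hF' ht)
    (mul_nonneg (sq_nonneg m) (proca_mass_energy_nonneg A ht))

/-- The Maxwell/Proca field satisfies the weak energy condition pointwise,
off-shell: `T(t,t) ≥ 0` for every timelike `t`. -/
theorem maxwell_proca_wec
    (n : ℕ) (hn : 1 ≤ n) (F : Matrix (Fin n) (Fin n) ℝ)
    (hF : ∀ a b : Fin n, F a b = -F b a)
    (A : Fin n → ℝ) (m : ℝ) :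
    ∀ t : Fin n → ℝ, minkowski t t < 0 → 0 ≤ procaT F A m t t :=
  maxwell_proca_wec_general n F hF A m
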